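/- Let G be a finite abelian group, r ≥ 1, δ ∈ (0,1), λ > 1, B ⊆ G a regular Bohr set, {A_i}_{i∈S} an (r, δ, λ)-simultaneously spread collection of subsets of B with α = Σ_{i∈S} (|A_i|/|G|)² > 0. Then for every regular Bohr set B' ≤ B of rank at most rk(B) + r and measure μ(B') ≥ δ·μ(B), ‖(α^{-1} Σ_{i∈S} 1_{A_i} ∘ 1_{A_i}) ∗ μ_{B'}‖_∞ ≤ √λ · μ(B)^{-1}. -/

import Mathlib

open scoped BigOperators Classical

noncomputable section

namespace SkewPaper

variable {G : Type*}

/-- Expectation (average) of `f` over a finite type: `E[f] = (1/|G|) ∑ x, f x`. -/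
def expect [Fintype G] (f : G → ℝ) : ℝ := (∑ x, f x) / (Fintype.card G)

/-- Normalized inner product `⟨f, g⟩ = E_{x∈G} f(x) g(x)`. -/
def inprod [Fintype G] (f g : G → ℝ) : ℝ := expect (fun x => f x * g x)

/-- Convolution `(f ∗ g)(x) = E_{y∈G} f(y) g(x − y)`. -/
def conv [Fintype G] [AddCommGroup G] (f g : G → ℝ) : G → ℝ :=
  fun x => expect (fun y => f y * g (x - y))

/-- Difference convolution `(f ∘ g)(x) = E_{y∈G} f(y) g(x + y)`. -/
def dconv [Fintype G] [AddCommGroup G] (f g : G → ℝ) : G → ℝ :=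
  fun x => expect (fun y => f y * g (x + y))

/-- Indicator function `1_A` of a set `A`. -/
def ind (A : Set G) : G → ℝ := Set.indicator A (fun _ => (1 : ℝ))

/-- Normalized indicator `μ_A = (|G|/|A|) · 1_A`. -/
def muSet [Fintype G] (A : Set G) : G → ℝ :=
  fun x => ((Fintype.card G : ℝ) / (Nat.card A : ℝ)) * ind A x

/-- `μ_f = f / E[f]`, the normalization of `f` to have mean 1. -/
def muFun [Fintype G] (f : G → ℝ) : G → ℝ := fun x => f x / expect f

/-- Weighted `L^p` norm `‖f‖_{p(ν)} = (E_x ν(x) |f(x)|^p)^{1/p}`. -/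
def wnorm [Fintype G] (p : ℕ) (ν f : G → ℝ) : ℝ :=
  (expect (fun x => ν x * |f x| ^ p)) ^ ((p : ℝ)⁻¹)

/-- `L^p` norm with respect to the uniform measure. -/
def pnorm [Fintype G] (p : ℕ) (f : G → ℝ) : ℝ := wnorm p (fun _ => 1) f

/-- Sup norm `‖f‖_∞`. -/
def supNorm (f : G → ℝ) : ℝ := ⨆ x, |f x|

/-- `A` is skew-corner-free: it contains no nontrivial skew corner
`(x,y), (x,y+h), (x+h,y')` with `h ≠ 0`. -/
def IsSkewCornerFree [AddCommGroup G] (A : Set (G × G)) : Prop :=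
  ∀ x y y' h : G, (x, y) ∈ A → (x, y + h) ∈ A → (x + h, y') ∈ A → h = 0

/-- The set of quadruples `(x, y, y', h)` forming a skew corner of `A`. -/
def skewCorners [AddCommGroup G] (A : Set (G × G)) : Set (G × G × G × G) :=
  {q | (q.1, q.2.1) ∈ A ∧ (q.1, q.2.1 + q.2.2.2) ∈ A ∧ (q.1 + q.2.2.2, q.2.2.1) ∈ A}

/-- The column `A_x = {y : (x,y) ∈ A}`. -/
def col (A : Set (G × G)) (x : G) : Set G := {y | (x, y) ∈ A}

/-- A Bohr set datum: a finite frequency set of characters together with a width. -/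
structure BohrSet (G : Type*) [AddCommGroup G] where
  freq : Finset (AddChar G ℂ)
  width : ℝ

namespace BohrSet

variable [AddCommGroup G]

/-- The underlying set `Bohr(Γ, φ) = {x : |1 − γ(x)| ≤ φ for all γ ∈ Γ}`. -/
def toSet (B : BohrSet G) : Set G :=
  {x | ∀ γ ∈ B.freq, ‖(1 : ℂ) - γ x‖ ≤ B.width}

/-- The rank `|Γ|` of a Bohr set. -/
def rank (B : BohrSet G) : ℕ := B.freq.card

/-- The dilate `B_ρ = Bohr(Γ, ρφ)`. -/
def dilate (B : BohrSet G) (ρ : ℝ) : BohrSet G := ⟨B.freq, ρ * B.width⟩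

/-- `B'` is a sub-Bohr set of `B` (written `B' ≤ B`): its frequency set contains
that of `B` and its width is at most that of `B`. -/
def Sub (B' B : BohrSet G) : Prop := B.freq ⊆ B'.freq ∧ B'.width ≤ B.width

/-- A Bohr set of rank `r` is regular if for all `0 ≤ κ ≤ 1/(100r)`,
`|B_{1+κ}| ≤ (1+100κr)|B|` and `|B_{1−κ}| ≥ (1−100κr)|B|`. -/
def IsRegular (B : BohrSet G) : Prop :=
  ∀ κ : ℝ, 0 ≤ κ → κ ≤ 1 / (100 * B.rank) →
    ((Nat.card (B.dilate (1 + κ)).toSet : ℝ) ≤ (1 + 100 * κ * B.rank) * (Nat.card B.toSet : ℝ) ∧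
     (Nat.card (B.dilate (1 - κ)).toSet : ℝ) ≥ (1 - 100 * κ * B.rank) * (Nat.card B.toSet : ℝ))

/-- The density `μ(B) = |B|/|G|`. -/
def measure [Fintype G] (B : BohrSet G) : ℝ := (Nat.card B.toSet : ℝ) / (Fintype.card G : ℝ)

/-- The normalized indicator measure `μ_B`. -/
def mu [Fintype G] (B : BohrSet G) : G → ℝ := muSet B.toSet

end BohrSet


/-- (r, λ)-simultaneously spread collection of subsets of 𝔽_q^n. -/
def SimSpread {F : Type*} [Field F] [Fintype F] {n : ℕ} {ι : Type*} [Fintype ι]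
    (A : ι → Set (Fin n → F)) (r : ℕ) (lam : ℝ) : Prop :=
  ∀ V : Submodule F (Fin n → F), n ≤ Module.finrank F V + r →
    ∀ x : ι → Fin n → F,
      ∑ i, ((Nat.card ↥(((fun a => a - x i) '' A i) ∩ (V : Set (Fin n → F))) : ℝ) /
            (Nat.card (V : Set (Fin n → F)) : ℝ)) ^ 2 ≤
        lam * ∑ i, ((Nat.card (A i) : ℝ) / ((Fintype.card F : ℝ) ^ n)) ^ 2

/-- (r, λ)-simultaneously spread in an ambient subspace `W`. -/
def SimSpreadIn {F : Type*} [Field F] [Fintype F] {n : ℕ} {ι : Type*} [Fintype ι]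
    (W : Submodule F (Fin n → F)) (A : ι → Set (Fin n → F)) (r : ℕ) (lam : ℝ) : Prop :=
  ∀ V : Submodule F (Fin n → F), V ≤ W → Module.finrank F W ≤ Module.finrank F V + r →
    ∀ x : ι → Fin n → F, (∀ i, x i ∈ W) →
      ∑ i, ((Nat.card ↥(((fun a => a - x i) '' A i) ∩ (V : Set (Fin n → F))) : ℝ) /
            (Nat.card (V : Set (Fin n → F)) : ℝ)) ^ 2 ≤
        lam * ∑ i, ((Nat.card (A i) : ℝ) / (Nat.card (W : Set (Fin n → F)) : ℝ)) ^ 2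

/-- (r, δ, λ)-simultaneously spread collection of subsets of a regular Bohr set `B`. -/
def SimSpreadBohr {G : Type*} [AddCommGroup G] [Fintype G] {ι : Type*} [Fintype ι]
    (B : BohrSet G) (A : ι → Set G) (r : ℕ) (δ lam : ℝ) : Prop :=
  ∀ B' : BohrSet G, B'.Sub B → B'.IsRegular → B'.rank ≤ B.rank + r →
    δ * B.measure ≤ B'.measure →
    ∀ x : ι → G,
      ∑ i, ((Nat.card ↥(((fun a => a - x i) '' A i) ∩ B'.toSet) : ℝ) /
            (Nat.card B'.toSet : ℝ)) ^ 2 ≤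
        lam * ∑ i, ((Nat.card (A i) : ℝ) / (Nat.card B.toSet : ℝ)) ^ 2

/-! ### Auxiliary lemmas for `statement7` -/

lemma ind_nonneg' {G : Type*} (A : Set G) (x : G) : 0 ≤ ind A x :=
  Set.indicator_nonneg (fun _ _ => zero_le_one) x

lemma card_set_eq_sum_ind {G : Type*} [Fintype G] (S : Set G) :
    (Nat.card S : ℝ) = ∑ x, ind S x := by
  classical
  have h1 : Nat.card S = S.toFinset.card := by
    rw [Nat.card_eq_fintype_card, Set.toFinset_card]
  have h2 : ∀ x, ind S x = if x ∈ S then (1:ℝ) else 0 := fun x => Set.indicator_apply _ _ _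
  simp only [h2, Finset.sum_boole, h1, ← Set.filter_mem_univ_eq_toFinset]

lemma count_eq {G : Type*} [AddCommGroup G] [Fintype G] (S : Set G)
    (hsym : ∀ v, v ∈ S ↔ -v ∈ S) (A : Set G) (s : G) :
    ∑ w, ind A w * ind S (s - w) = (Nat.card ↥(((fun a => a - s) '' A) ∩ S) : ℝ) := by
  classical
  rw [card_set_eq_sum_ind]
  rw [← Equiv.sum_comp (Equiv.subRight s) (ind (((fun a => a - s) '' A) ∩ S))]
  apply Finset.sum_congr rfl
  intro w _
  have hmem : ((Equiv.subRight s) w ∈ (((fun a => a - s) '' A) ∩ S)) ↔ (w ∈ A ∧ s - w ∈ S) := by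
    rw [Equiv.subRight_apply, Set.mem_inter_iff]
    constructor
    · rintro ⟨⟨a, ha, has⟩, h2⟩
      have haw : a = w := by
        have : a - s = w - s := has
        exact sub_left_injective this
      refine ⟨haw ▸ ha, ?_⟩
      rw [← neg_sub w s, ← hsym]
      exact h2
    · rintro ⟨h1, h2⟩
      refine ⟨⟨w, h1, rfl⟩, ?_⟩
      rw [hsym, neg_sub]
      exact h2
  have hS : w - s ∈ S ↔ s - w ∈ S := by rw [hsym, neg_sub]
  simp only [ind, Set.indicator_apply]
  by_cases h1 : w ∈ A <;> by_cases h2 : s - w ∈ S <;> simp [hmem, h1, h2, hS]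

lemma bohr_symm' {G : Type*} [AddCommGroup G] [Fintype G] (B : BohrSet G) (v : G) :
    v ∈ B.toSet ↔ -v ∈ B.toSet := by
  have key : ∀ x : G, ∀ γ : AddChar G ℂ, ‖(1:ℂ) - γ (-x)‖ = ‖(1:ℂ) - γ x‖ := by
    intro x γ
    have h1 : ‖γ x‖ = 1 := AddChar.norm_apply γ x
    have hne : γ x ≠ 0 := by
      intro h; rw [h, norm_zero] at h1; exact one_ne_zero h1.symm
    rw [AddChar.map_neg_eq_inv]
    calc ‖(1:ℂ) - (γ x)⁻¹‖ = ‖γ x‖ * ‖(1:ℂ) - (γ x)⁻¹‖ := by rw [h1, one_mul]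
      _ = ‖γ x * ((1:ℂ) - (γ x)⁻¹)‖ := (norm_mul _ _).symm
      _ = ‖γ x - 1‖ := by rw [mul_sub, mul_one, mul_inv_cancel₀ hne]
      _ = ‖(1:ℂ) - γ x‖ := norm_sub_rev _ _
  constructor
  · intro hv γ hγ; rw [key]; exact hv γ hγ
  · intro hv γ hγ; rw [← key]; exact hv γ hγ

lemma conv_formula {G : Type*} [AddCommGroup G] [Fintype G] {ι : Type*} [Fintype ι]
    (α : ℝ) (A : ι → Set G) (B' : BohrSet G) (x : G) :
    conv (fun y => α⁻¹ * ∑ i, dconv (ind (A i)) (ind (A i)) y) B'.mu x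
      = α⁻¹ * ((Fintype.card G : ℝ) / (Nat.card B'.toSet : ℝ)) * (1 / (Fintype.card G : ℝ)) *
          (∑ i, ∑ z, ind (A i) z *
            (Nat.card ↥(((fun a => a - (x + z)) '' (A i)) ∩ B'.toSet) : ℝ)) /
        (Fintype.card G : ℝ) := by
  classical
  have key : ∀ (i : ι) (z : G), ∑ y, ind (A i) (y + z) * ind B'.toSet (x - y)
      = (Nat.card ↥(((fun a => a - (x + z)) '' (A i)) ∩ B'.toSet) : ℝ) := by
    intro i z
    rw [← count_eq B'.toSet (bohr_symm' B') (A i) (x + z)]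
    rw [← Equiv.sum_comp (Equiv.addRight z) (fun w => ind (A i) w * ind B'.toSet ((x + z) - w))]
    apply Finset.sum_congr rfl
    intro y _
    simp only [Equiv.coe_addRight]
    congr 2
    abel
  have h1 : ∀ y, (α⁻¹ * ∑ i, dconv (ind (A i)) (ind (A i)) y) * B'.mu (x - y)
      = α⁻¹ * ((Fintype.card G : ℝ) / (Nat.card B'.toSet : ℝ)) * (1 / (Fintype.card G : ℝ)) *
        ∑ i, ∑ z, ind (A i) z * (ind (A i) (y + z) * ind B'.toSet (x - y)) := by
    intro y
    have inner : ∀ i, ∑ z, ind (A i) z * (ind (A i) (y + z) * ind B'.toSet (x - y))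
        = (∑ z, ind (A i) z * ind (A i) (y + z)) * ind B'.toSet (x - y) := by
      intro i
      rw [Finset.sum_mul]
      exact Finset.sum_congr rfl fun z _ => (mul_assoc _ _ _).symm
    simp only [inner]
    rw [← Finset.sum_mul]
    simp only [dconv, expect, BohrSet.mu, muSet]
    rw [← Finset.sum_div]
    ring
  have h0 : conv (fun y => α⁻¹ * ∑ i, dconv (ind (A i)) (ind (A i)) y) B'.mu x
      = (∑ y, (α⁻¹ * ∑ i, dconv (ind (A i)) (ind (A i)) y) * B'.mu (x - y)) /
        (Fintype.card G : ℝ) := rfl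
  rw [h0]
  congr 1
  rw [Finset.sum_congr rfl fun y _ => h1 y]
  rw [← Finset.mul_sum]
  congr 1
  rw [Finset.sum_comm]
  refine Finset.sum_congr rfl fun i _ => ?_
  rw [Finset.sum_comm]
  refine Finset.sum_congr rfl fun z _ => ?_
  rw [← Finset.mul_sum, key i z]


theorem statement7 {G : Type*} [AddCommGroup G] [Fintype G] {ι : Type*} [Fintype ι]
    (r : ℕ) (hr : 1 ≤ r) (δ : ℝ) (hδ0 : 0 < δ) (hδ1 : δ < 1) (lam : ℝ) (hlam : 1 < lam)
    (B : BohrSet G) (hB : B.IsRegular) (A : ι → Set G) (hAB : ∀ i, A i ⊆ B.toSet)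
    (hspread : SimSpreadBohr B A r δ lam) (α : ℝ)
    (hα : α = ∑ i, ((Nat.card (A i) : ℝ) / (Fintype.card G : ℝ)) ^ 2) (hα0 : 0 < α)
    (B' : BohrSet G) (hB'B : B'.Sub B) (hB' : B'.IsRegular)
    (hrk : B'.rank ≤ B.rank + r) (hmeas : δ * B.measure ≤ B'.measure) :
    supNorm (conv (fun y => α⁻¹ * ∑ i, dconv (ind (A i)) (ind (A i)) y) B'.mu) ≤
      Real.sqrt lam * B.measure⁻¹ := by
  classical
  obtain ⟨i0, hi0⟩ : ∃ i, (A i).Nonempty := by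
    by_contra h
    push_neg at h
    have hz : α = 0 := by
      rw [hα]
      refine Finset.sum_eq_zero fun i _ => ?_
      have he : A i = ∅ := h i
      simp [he]
    exact absurd hz (ne_of_gt hα0)
  have hlam0 : (0:ℝ) ≤ lam := le_of_lt (lt_trans one_pos hlam)
  set N : ℝ := (Fintype.card G : ℝ) with hNdef
  set nB : ℝ := (Nat.card B.toSet : ℝ) with hnBdef
  set n' : ℝ := (Nat.card B'.toSet : ℝ) with hn'def
  have hN0 : (0:ℝ) < N := by rw [hNdef]; exact_mod_cast Fintype.card_pos
  have hBne : B.toSet.Nonempty := ⟨hi0.choose, hAB i0 hi0.choose_spec⟩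
  have hnB0 : (0:ℝ) < nB := by
    have := hBne.to_subtype
    rw [hnBdef]
    exact_mod_cast Nat.card_pos (α := ↥B.toSet)
  have hmB : B.measure = nB / N := rfl
  have hmB' : B'.measure = n' / N := rfl
  have hn'0 : (0:ℝ) < n' := by
    have h1 : 0 < δ * B.measure := mul_pos hδ0 (by rw [hmB]; exact div_pos hnB0 hN0)
    have h2 : 0 < B'.measure := lt_of_lt_of_le h1 hmeas
    rw [hmB'] at h2
    rcases div_pos_iff.mp h2 with ⟨h, _⟩ | ⟨_, h⟩
    · exact h
    · linarith
  set a : ι → ℝ := fun i => (Nat.card (A i) : ℝ) with hadef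
  set c : ι → G → ℝ := fun i s => (Nat.card ↥(((fun a => a - s) '' A i) ∩ B'.toSet) : ℝ)
    with hcdef
  have hc0 : ∀ i s, 0 ≤ c i s := fun i s => Nat.cast_nonneg _
  have hex : ∀ i, ∃ s : G, ∀ t : G, c i t ≤ c i s := by
    intro i
    obtain ⟨s, -, hs⟩ := Finset.exists_max_image (Finset.univ : Finset G) (c i)
      ⟨0, Finset.mem_univ 0⟩
    exact ⟨s, fun t => hs t (Finset.mem_univ t)⟩
  choose xs hxs using hex
  have hs' : ∑ i, (c i (xs i) / n') ^ 2 ≤ lam * ∑ i, (a i / nB) ^ 2 :=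
    hspread B' hB'B hB' hrk hmeas xs
  set SA : ℝ := ∑ i, (a i) ^ 2 with hSAdef
  have hSA0 : 0 ≤ SA := Finset.sum_nonneg fun i _ => sq_nonneg _
  have hSA : SA = α * N ^ 2 := by
    have hα' : α = SA / N ^ 2 := by
      rw [hα]
      simp only [div_pow]
      rw [← Finset.sum_div, hSAdef]
    rw [hα']
    field_simp
  have hsum_c : ∑ i, (c i (xs i)) ^ 2 ≤ lam * (n' / nB) ^ 2 * SA := by
    have e1 : ∑ i, (c i (xs i)) ^ 2 = n' ^ 2 * ∑ i, (c i (xs i) / n') ^ 2 := by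
      rw [Finset.mul_sum]
      refine Finset.sum_congr rfl fun i _ => ?_
      rw [div_pow]
      field_simp
    have e2 : ∑ i, (a i / nB) ^ 2 = SA / nB ^ 2 := by
      simp only [div_pow]
      rw [← Finset.sum_div, hSAdef]
    calc ∑ i, (c i (xs i)) ^ 2 = n' ^ 2 * ∑ i, (c i (xs i) / n') ^ 2 := e1
      _ ≤ n' ^ 2 * (lam * ∑ i, (a i / nB) ^ 2) :=
          mul_le_mul_of_nonneg_left hs' (sq_nonneg n')
      _ = lam * (n' / nB) ^ 2 * SA := by
          rw [e2]
          field_simp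
  have hDle : ∀ x : G, (∑ i, ∑ z, ind (A i) z * c i (x + z))
      ≤ Real.sqrt lam * (n' / nB * SA) := by
    intro x
    have step1 : ∀ i : ι, ∑ z, ind (A i) z * c i (x + z) ≤ a i * c i (xs i) := by
      intro i
      calc ∑ z, ind (A i) z * c i (x + z) ≤ ∑ z, ind (A i) z * c i (xs i) :=
            Finset.sum_le_sum fun z _ =>
              mul_le_mul_of_nonneg_left (hxs i (x + z)) (ind_nonneg' _ _)
        _ = a i * c i (xs i) := by
            rw [← Finset.sum_mul, ← card_set_eq_sum_ind]
    have step2 : ∑ i, ∑ z, ind (A i) z * c i (x + z) ≤ ∑ i, a i * c i (xs i) :=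
      Finset.sum_le_sum fun i _ => step1 i
    have hCS : (∑ i, a i * c i (xs i)) ^ 2 ≤ SA * ∑ i, (c i (xs i)) ^ 2 := by
      simpa [hSAdef] using
        Finset.sum_mul_sq_le_sq_mul_sq Finset.univ a (fun i => c i (xs i))
    have h4 : (∑ i, a i * c i (xs i)) ^ 2 ≤ SA * (lam * (n' / nB) ^ 2 * SA) :=
      le_trans hCS (mul_le_mul_of_nonneg_left hsum_c hSA0)
    have h5 : ∑ i, a i * c i (xs i) ≤ Real.sqrt (SA * (lam * (n' / nB) ^ 2 * SA)) :=
      calc ∑ i, a i * c i (xs i) ≤ |∑ i, a i * c i (xs i)| := le_abs_self _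
        _ = Real.sqrt ((∑ i, a i * c i (xs i)) ^ 2) := (Real.sqrt_sq_eq_abs _).symm
        _ ≤ Real.sqrt (SA * (lam * (n' / nB) ^ 2 * SA)) := Real.sqrt_le_sqrt h4
    have h6 : Real.sqrt (SA * (lam * (n' / nB) ^ 2 * SA))
        = Real.sqrt lam * (n' / nB * SA) := by
      rw [show SA * (lam * (n' / nB) ^ 2 * SA) = lam * (n' / nB * SA) ^ 2 by ring]
      rw [Real.sqrt_mul hlam0, Real.sqrt_sq
        (mul_nonneg (div_nonneg hn'0.le hnB0.le) hSA0)]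
    exact le_trans step2 (h5.trans_eq h6)
  have hcf : ∀ x : G, conv (fun y => α⁻¹ * ∑ i, dconv (ind (A i)) (ind (A i)) y) B'.mu x
      = α⁻¹ * (N / n') * (1 / N) * (∑ i, ∑ z, ind (A i) z * c i (x + z)) / N :=
    fun x => conv_formula α A B' x
  have hnn : ∀ x : G, 0 ≤ conv (fun y => α⁻¹ * ∑ i, dconv (ind (A i)) (ind (A i)) y) B'.mu x := by
    intro x
    rw [hcf x]
    have hD0 : 0 ≤ ∑ i, ∑ z, ind (A i) z * c i (x + z) :=
      Finset.sum_nonneg fun i _ => Finset.sum_nonneg fun z _ =>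
        mul_nonneg (ind_nonneg' _ _) (hc0 i _)
    exact div_nonneg (mul_nonneg (mul_nonneg (mul_nonneg (inv_nonneg.mpr hα0.le)
      (div_nonneg hN0.le hn'0.le)) (by positivity)) hD0) hN0.le
  have hbx : ∀ x : G,
      conv (fun y => α⁻¹ * ∑ i, dconv (ind (A i)) (ind (A i)) y) B'.mu x
        ≤ Real.sqrt lam * B.measure⁻¹ := by
    intro x
    rw [hcf x, hmB]
    have hC0 : 0 ≤ α⁻¹ * (N / n') * (1 / N) :=
      mul_nonneg (mul_nonneg (inv_nonneg.mpr hα0.le) (div_nonneg hN0.le hn'0.le))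
        (by positivity)
    calc α⁻¹ * (N / n') * (1 / N) * (∑ i, ∑ z, ind (A i) z * c i (x + z)) / N
        ≤ α⁻¹ * (N / n') * (1 / N) * (Real.sqrt lam * (n' / nB * SA)) / N := by
          exact (div_le_div_iff_of_pos_right hN0).mpr (mul_le_mul_of_nonneg_left (hDle x) hC0)
      _ = Real.sqrt lam * (nB / N)⁻¹ := by
          rw [hSA]
          have hα' : α ≠ 0 := ne_of_gt hα0
          have hN' : N ≠ 0 := ne_of_gt hN0
          have hn'' : n' ≠ 0 := ne_of_gt hn'0
          have hnB' : nB ≠ 0 := ne_of_gt hnB0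
          field_simp
  simp only [supNorm]
  have : Nonempty G := ⟨0⟩
  refine ciSup_le fun x => ?_
  rw [abs_of_nonneg (hnn x)]
  exact hbx x

end SkewPaper
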